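/- Let f and g be norms on ℝ^p, let g* denote the dual norm of g, let (a, b) be a linear classifier with a ≠ 0, let ρ > 0, let x_F ∈ ℝ^p satisfy ⟪a, x_F⟫ < b, and let x_RCF be an optimal robust counterfactual of x_F under f with robustness norm g and radius ρ, with x_RCF ≠ x_F. Then there exists λ ∈ ℝ with λ ≠ 0 such that ⟪a, x_RCF⟫ = b + ρ · g*(a) and λ • a ∈ ∂f(x_RCF − x_F). -/

import Mathlib

/-!
Robust feasibility of `z` only depends on `⟪a, z⟫`: the worst perturbation `s` with `g s ≤ ρ`
lowers `⟪a, z⟫` by exactly `ρ · g*(a)` (finite, since any robustly feasible point bounds `⟪a, ·⟫`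
on the unit ball of `g`). So an optimal robust counterfactual is an ordinary optimal
counterfactual for the shifted threshold `b' = b + ρ · g*(a)`. For the latter, rescaling any
direction `y` with `⟪a, y⟫ > 0` onto the hyperplane `⟪a, ·⟫ = b'` and comparing with the optimum
gives `f(d) ⟪a, y⟫ ≤ (b' - ⟪a, x_F⟫) f(y)` for `d = x_RCF - x_F`. Taking `y = d` puts `x_RCF` on
the hyperplane, and for general `y` it says that `f(d) / ⟪a, d⟫ • a` is a subgradient of `f` at `d`.
-/

open Finset

noncomputable section

/-- The standard inner product on `Fin p → ℝ`. -/
def dot {p : ℕ} (a x : Fin p → ℝ) : ℝ := ∑ k, a k * x k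

/-- `f` is a norm on `ℝ^p`. -/
def IsNorm {p : ℕ} (f : (Fin p → ℝ) → ℝ) : Prop :=
  (∀ x, f x = 0 ↔ x = 0) ∧ (∀ (c : ℝ) (x : Fin p → ℝ), f (c • x) = |c| * f x) ∧
    (∀ x y, f (x + y) ≤ f x + f y)

/-- The dual norm `f*(w) = sup { ⟪w, v⟫ : f v ≤ 1 }`. -/
def dualNorm {p : ℕ} (f : (Fin p → ℝ) → ℝ) (w : Fin p → ℝ) : ℝ :=
  sSup {t : ℝ | ∃ v : Fin p → ℝ, f v ≤ 1 ∧ t = dot w v}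

/-- `xCF` is an optimal counterfactual of the factual `xF` (classified 'No') under norm `f`. -/
def IsOptCF {p : ℕ} (a : Fin p → ℝ) (b : ℝ) (f : (Fin p → ℝ) → ℝ)
    (xF xCF : Fin p → ℝ) : Prop :=
  b ≤ dot a xCF ∧ ∀ z : Fin p → ℝ, b ≤ dot a z → f (xCF - xF) ≤ f (z - xF)

/-- `xRCF` is an optimal robust counterfactual of the factual `xF` (classified 'No')
under norm `f`, with robustness norm `g` and radius `ρ`. -/
def IsOptRCF {p : ℕ} (a : Fin p → ℝ) (b : ℝ) (f g : (Fin p → ℝ) → ℝ) (ρ : ℝ)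
    (xF xRCF : Fin p → ℝ) : Prop :=
  (∀ s : Fin p → ℝ, g s ≤ ρ → b ≤ dot a (xRCF + s)) ∧
    ∀ z : Fin p → ℝ, (∀ s : Fin p → ℝ, g s ≤ ρ → b ≤ dot a (z + s)) →
      f (xRCF - xF) ≤ f (z - xF)

/-- `w` is a subgradient of `f` at `x₀`. -/
def IsSubgradient {p : ℕ} (f : (Fin p → ℝ) → ℝ) (x₀ w : Fin p → ℝ) : Prop :=
  ∀ y : Fin p → ℝ, f x₀ + dot w (y - x₀) ≤ f y

@[simp]
theorem dot_zero_right {p : ℕ} (a : Fin p → ℝ) : dot a 0 = 0 := dotProduct_zero a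

@[simp]
theorem dot_add_right {p : ℕ} (a x y : Fin p → ℝ) : dot a (x + y) = dot a x + dot a y :=
  dotProduct_add a x y

@[simp]
theorem dot_sub_right {p : ℕ} (a x y : Fin p → ℝ) : dot a (x - y) = dot a x - dot a y :=
  dotProduct_sub a x y

@[simp]
theorem dot_smul_right {p : ℕ} (a : Fin p → ℝ) (c : ℝ) (x : Fin p → ℝ) :
    dot a (c • x) = c * dot a x :=
  dotProduct_smul c a x

@[simp]
theorem dot_smul_left {p : ℕ} (a : Fin p → ℝ) (c : ℝ) (x : Fin p → ℝ) :
    dot (c • a) x = c * dot a x :=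
  smul_dotProduct c a x

namespace IsNorm

variable {p : ℕ} {f : (Fin p → ℝ) → ℝ}

theorem map_zero (hf : IsNorm f) : f 0 = 0 := (hf.1 0).2 rfl

theorem map_smul_of_nonneg (hf : IsNorm f) {c : ℝ} (hc : 0 ≤ c) (x : Fin p → ℝ) :
    f (c • x) = c * f x := by
  rw [hf.2.1, abs_of_nonneg hc]

theorem nonneg (hf : IsNorm f) (x : Fin p → ℝ) : 0 ≤ f x := by
  have h := hf.2.2 x (-x)
  rw [add_neg_cancel, hf.map_zero, ← neg_one_smul ℝ x, hf.2.1, abs_neg, abs_one, one_mul] at h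
  linarith

theorem pos_iff (hf : IsNorm f) {x : Fin p → ℝ} : 0 < f x ↔ x ≠ 0 := by
  rw [(hf.nonneg x).lt_iff_ne', Ne, hf.1]

end IsNorm

section DualNorm

variable {p : ℕ} {g : (Fin p → ℝ) → ℝ} {a : Fin p → ℝ} {M : ℝ}

theorem dot_le_dualNorm (hM : ∀ w, g w ≤ 1 → dot a w ≤ M) {v : Fin p → ℝ} (hv : g v ≤ 1) :
    dot a v ≤ dualNorm g a :=
  le_csSup ⟨M, by rintro _ ⟨w, hw, rfl⟩; exact hM w hw⟩ ⟨v, hv, rfl⟩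

theorem dualNorm_le (hg : IsNorm g) (hM : ∀ w, g w ≤ 1 → dot a w ≤ M) : dualNorm g a ≤ M :=
  csSup_le ⟨0, 0, by simp [hg.map_zero], by simp⟩ (by rintro _ ⟨w, hw, rfl⟩; exact hM w hw)

theorem dualNorm_nonneg (hg : IsNorm g) (hM : ∀ w, g w ≤ 1 → dot a w ≤ M) :
    0 ≤ dualNorm g a := by
  simpa using dot_le_dualNorm hM (v := 0) (by simp [hg.map_zero])

end DualNorm

def IsRobustFeasible {p : ℕ} (a : Fin p → ℝ) (b : ℝ) (g : (Fin p → ℝ) → ℝ) (ρ : ℝ)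
    (z : Fin p → ℝ) : Prop :=
  ∀ s : Fin p → ℝ, g s ≤ ρ → b ≤ dot a (z + s)

section Robust

variable {p : ℕ} {a : Fin p → ℝ} {b ρ : ℝ} {f g : (Fin p → ℝ) → ℝ} {z z₀ : Fin p → ℝ}

theorem IsRobustFeasible.dot_le (hg : IsNorm g) (hρ : 0 < ρ) (hz : IsRobustFeasible a b g ρ z)
    {v : Fin p → ℝ} (hv : g v ≤ 1) : dot a v ≤ (dot a z - b) / ρ := by
  have hs : g (-ρ • v) ≤ ρ := by
    rw [hg.2.1, abs_neg, abs_of_pos hρ]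
    exact mul_le_of_le_one_right hρ.le hv
  have h := hz _ hs
  rw [dot_add_right, dot_smul_right] at h
  rw [le_div_iff₀ hρ]
  linarith

theorem isRobustFeasible_iff (hg : IsNorm g) (hρ : 0 < ρ) (hz₀ : IsRobustFeasible a b g ρ z₀) :
    IsRobustFeasible a b g ρ z ↔ b + ρ * dualNorm g a ≤ dot a z := by
  constructor
  · intro hz
    have h := dualNorm_le hg fun w hw => hz.dot_le hg hρ hw
    rw [le_div_iff₀ hρ] at h
    linarith
  · intro hz s hs
    have hv : g (-ρ⁻¹ • s) ≤ 1 := by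
      rw [hg.2.1, abs_neg, abs_inv, abs_of_pos hρ]
      exact inv_mul_le_one_of_le₀ hs hρ.le
    have h := mul_le_mul_of_nonneg_left
      (dot_le_dualNorm (fun w hw => hz₀.dot_le hg hρ hw) hv) hρ.le
    rw [dot_smul_right, neg_mul, mul_neg, mul_inv_cancel_left₀ hρ.ne'] at h
    rw [dot_add_right]
    linarith

theorem IsOptRCF.isOptCF {xF x : Fin p → ℝ} (hg : IsNorm g) (hρ : 0 < ρ)
    (h : IsOptRCF a b f g ρ xF x) : IsOptCF a (b + ρ * dualNorm g a) f xF x :=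
  ⟨(isRobustFeasible_iff hg hρ h.1).1 h.1,
    fun z hz => h.2 z ((isRobustFeasible_iff hg hρ h.1).2 hz)⟩

end Robust

namespace IsOptCF

variable {p : ℕ} {a : Fin p → ℝ} {b : ℝ} {f : (Fin p → ℝ) → ℝ} {xF x : Fin p → ℝ}

theorem ne (hxF : dot a xF < b) (h : IsOptCF a b f xF x) : x ≠ xF := by
  rintro rfl
  exact hxF.not_ge h.1

theorem mul_dot_le (hf : IsNorm f) (hxF : dot a xF ≤ b) (h : IsOptCF a b f xF x)
    {y : Fin p → ℝ} (hy : 0 < dot a y) : f (x - xF) * dot a y ≤ (b - dot a xF) * f y := by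
  set u := (b - dot a xF) / dot a y
  have hu : 0 ≤ u := div_nonneg (sub_nonneg.2 hxF) hy.le
  have hu_dot : u * dot a y = b - dot a xF := div_mul_cancel₀ _ hy.ne'
  have hz : b ≤ dot a (xF + u • y) := by
    rw [dot_add_right, dot_smul_right, hu_dot]
    linarith
  have hle := h.2 _ hz
  rw [add_sub_cancel_left, hf.map_smul_of_nonneg hu] at hle
  calc f (x - xF) * dot a y ≤ u * f y * dot a y := mul_le_mul_of_nonneg_right hle hy.le
    _ = (b - dot a xF) * f y := by rw [mul_right_comm, hu_dot]

theorem dot_eq (hf : IsNorm f) (hxF : dot a xF < b) (h : IsOptCF a b f xF x) : dot a x = b := by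
  have hd : 0 < dot a (x - xF) := by rw [dot_sub_right]; linarith [h.1]
  have hfd : 0 < f (x - xF) := hf.pos_iff.2 (sub_ne_zero.2 (h.ne hxF))
  have hle := h.mul_dot_le hf hxF.le hd
  rw [mul_comm] at hle
  have hd_le := le_of_mul_le_mul_right hle hfd
  rw [dot_sub_right] at hd_le
  exact le_antisymm (by linarith) h.1

theorem isSubgradient (hf : IsNorm f) (hxF : dot a xF < b) (h : IsOptCF a b f xF x) :
    IsSubgradient f (x - xF) ((f (x - xF) / (b - dot a xF)) • a) := by
  have hc : 0 < b - dot a xF := sub_pos.2 hxF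
  set l := f (x - xF) / (b - dot a xF)
  have hl : l * dot a (x - xF) = f (x - xF) := by
    rw [dot_sub_right, h.dot_eq hf hxF, div_mul_cancel₀ _ hc.ne']
  have hbound : ∀ y, l * dot a y ≤ f y := by
    intro y
    rcases le_or_gt (dot a y) 0 with hy | hy
    · exact (mul_nonpos_of_nonneg_of_nonpos (div_nonneg (hf.nonneg _) hc.le) hy).trans
        (hf.nonneg y)
    · rw [div_mul_eq_mul_div, div_le_iff₀ hc, mul_comm (f y)]
      exact h.mul_dot_le hf hxF.le hy
  intro y
  rw [dot_smul_left, dot_sub_right, mul_sub, hl]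
  linarith [hbound y]

end IsOptCF

theorem rcf_optimality_conditions_general {p : ℕ}
    (f g : (Fin p → ℝ) → ℝ) (hf : IsNorm f) (hg : IsNorm g)
    (a : Fin p → ℝ) (b : ℝ) (ρ : ℝ) (hρ : 0 < ρ)
    (xF xRCF : Fin p → ℝ) (hxF : dot a xF < b)
    (hopt : IsOptRCF a b f g ρ xF xRCF) :
    ∃ l : ℝ, l ≠ 0 ∧ dot a xRCF = b + ρ * dualNorm g a ∧
      IsSubgradient f (xRCF - xF) (l • a) := by
  have hcf := hopt.isOptCF hg hρ
  have hD : 0 ≤ dualNorm g a :=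
    dualNorm_nonneg hg fun w hw => IsRobustFeasible.dot_le hg hρ hopt.1 hw
  have hxF' : dot a xF < b + ρ * dualNorm g a :=
    hxF.trans_le (le_add_of_nonneg_right (mul_nonneg hρ.le hD))
  refine ⟨_, ?_, hcf.dot_eq hf hxF', hcf.isSubgradient hf hxF'⟩
  exact div_ne_zero (hf.pos_iff.2 (sub_ne_zero.2 (hcf.ne hxF'))).ne' (sub_pos.2 hxF').ne'

/-- Optimality conditions for robust counterfactuals (Lemma 4): an optimal robust
counterfactual satisfies `⟪a, x_RCF⟫ = b + ρ·g*(a)` and some nonzero multiple of `a`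
is a subgradient of the norm `f` at `x_RCF − x_F`. -/
theorem rcf_optimality_conditions {p : ℕ} (hp : 1 ≤ p)
    (f g : (Fin p → ℝ) → ℝ) (hf : IsNorm f) (hg : IsNorm g)
    (a : Fin p → ℝ) (ha : a ≠ 0) (b : ℝ) (ρ : ℝ) (hρ : 0 < ρ)
    (xF xRCF : Fin p → ℝ) (hxF : dot a xF < b)
    (hopt : IsOptRCF a b f g ρ xF xRCF) (hne : xRCF ≠ xF) :
    ∃ l : ℝ, l ≠ 0 ∧ dot a xRCF = b + ρ * dualNorm g a ∧
      IsSubgradient f (xRCF - xF) (l • a) :=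
  rcf_optimality_conditions_general f g hf hg a b ρ hρ xF xRCF hxF hopt
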